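/- Let n ≥ 1, let π be a permutation of {1, …, n+1}, and fix i ∈ {1, …, n}. Let j_1 < j_2 < … < j_r be the complete list of indices j such that (i,j) is a box for π. Then for each t ∈ {1, …, r}, the box (i,j_t) is windmilled if and only if t is even. In particular r is odd, the first and last boxes in row i are non-windmilled, and row i contains exactly (r−1)/2 windmilled boxes and (r+1)/2 non-windmilled boxes. -/

import Mathlib

/-!
Fix the row `i`, let `m < M` be the two values `π i`, `π (i + 1)`, and let `g j` record whether
the value `j` sits at a position `≤ i` of `π` (`leftOf π i j`). As `σ m` and `σ M` are `i` and
`i + 1` in some order, `g m ≠ g M`. The boxes of row `i` are exactly the `j ∈ [m, M)` at which `g`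
switches (`g j ≠ g (j + 1)`), and such a box is windmilled iff `g j ≠ g m`. The `t`-th switch is
preceded by `t` switches, so `g` equals `g m` there iff `t` is even; and since `g m ≠ g M` the
number of switches in `[m, M)` is odd.
-/

/-- `(i,j)` is a box for the permutation `π` with inverse `σ`:
`min(π i, π (i+1)) ≤ j < max(π i, π (i+1))` and `min(σ j, σ (j+1)) ≤ i < max(σ j, σ (j+1))`. -/
def IsBox (π σ : ℕ → ℕ) (i j : ℕ) : Prop :=
  min (π i) (π (i+1)) ≤ j ∧ j < max (π i) (π (i+1)) ∧
  min (σ j) (σ (j+1)) ≤ i ∧ i < max (σ j) (σ (j+1))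

instance (π σ : ℕ → ℕ) (i j : ℕ) : Decidable (IsBox π σ i j) := by
  unfold IsBox; infer_instance

/-- A box `(i,j)` is windmilled if exactly one of `π i > j` and `σ j > i` holds. -/
def Windmilled (π σ : ℕ → ℕ) (i j : ℕ) : Prop :=
  IsBox π σ i j ∧ Xor (j < π i) (i < σ j)

instance (π σ : ℕ → ℕ) (i j : ℕ) : Decidable (Windmilled π σ i j) := by
  unfold Windmilled; infer_instance

/-- The matrix `A(π)`: `-1` on windmilled boxes, `1` on non-windmilled boxes, `0` elsewhere. -/
def AMat (π σ : ℕ → ℕ) (i j : ℕ) : ℤ :=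
  if Windmilled π σ i j then -1 else if IsBox π σ i j then 1 else 0

/-- Baxter condition (dividing-line form) for a permutation `π` of `{1, …, n+1}`
with inverse `σ`. -/
def IsBaxter (n : ℕ) (π σ : ℕ → ℕ) : Prop :=
  ∀ i ∈ Finset.Icc 1 n,
    ∃ c, min (π i) (π (i+1)) ≤ c ∧ c < max (π i) (π (i+1)) ∧
      ∀ d, min (π i) (π (i+1)) < d → d < max (π i) (π (i+1)) →
        (π i < π (i+1) → (d ≤ c → σ d < i) ∧ (c < d → σ d > i + 1)) ∧
        (π (i+1) < π i → (d ≤ c → σ d > i + 1) ∧ (c < d → σ d < i))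

open Finset

theorem Nat.card_filter_range_odd (r : ℕ) : #{t ∈ range r | Odd t} = r / 2 := by
  induction r with
  | zero => rfl
  | succ r ih =>
    rw [range_add_one, filter_insert]
    split_ifs with hr
    · rw [card_insert_of_notMem (by simp), ih]
      obtain ⟨k, rfl⟩ := hr
      omega
    · rw [ih]
      obtain ⟨k, rfl⟩ := Nat.not_odd_iff_even.1 hr
      omega

namespace Finset

variable {α : Type*} [LinearOrder α]

theorem card_filter_lt_sort_getElem (S : Finset α) {t : ℕ}
    (ht : t < (S.sort (· ≤ ·)).length) :
    #{x ∈ S | x < (S.sort (· ≤ ·))[t]} = t := by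
  set f := S.orderEmbOfFin rfl
  calc #{x ∈ S | x < (S.sort (· ≤ ·))[t]} =
        #{x ∈ univ.map f.toEmbedding | x < f ⟨t, by simpa using ht⟩} := by
        rw [S.map_orderEmbOfFin_univ]; rfl
    _ = t := by
      rw [filter_map, card_map]
      simp only [Function.comp_def, RelEmbedding.coe_toEmbedding, OrderEmbedding.lt_iff_lt]
      rw [filter_gt_eq_Iio, Fin.card_Iio]

theorem card_filter_of_sort_getElem_iff_odd (S : Finset α) (P : α → Prop) [DecidablePred P]
    (hP : ∀ t (ht : t < (S.sort (· ≤ ·)).length), P (S.sort (· ≤ ·))[t] ↔ Odd t) :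
    #{x ∈ S | P x} = #S / 2 := by
  set f := S.orderEmbOfFin rfl
  calc #{x ∈ S | P x} = #{x ∈ univ.map f.toEmbedding | P x} := by
        rw [S.map_orderEmbOfFin_univ]
    _ = #{t : Fin #S | Odd (t : ℕ)} := by
      rw [filter_map, card_map]
      exact congrArg card (filter_congr fun t _ => hP t (by simp))
    _ = #{t ∈ range #S | Odd t} := by
      rw [card_filter, card_filter, Fin.sum_univ_eq_sum_range (fun t => if Odd t then 1 else 0)]
    _ = #S / 2 := Nat.card_filter_range_odd _

end Finset

def switches (g : ℕ → Bool) (a b : ℕ) : Finset ℕ := {k ∈ Ico a b | g k ≠ g (k + 1)}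

section Switches

variable (g : ℕ → Bool)

theorem eq_iff_even_card_switches {a b : ℕ} (hab : a ≤ b) :
    g b = g a ↔ Even #(switches g a b) := by
  induction b, hab using Nat.le_induction with
  | base => simp [switches]
  | succ b hab ih =>
    have hb : b ∉ switches g a b := by simp [switches]
    rw [switches, Nat.Ico_succ_right_eq_insert_Ico hab, filter_insert, ← switches]
    by_cases h : g b = g (b + 1)
    · rw [if_neg (not_not.2 h), ← h, ih]
    · rw [if_pos h, card_insert_of_notMem hb, Nat.even_add_one, ← ih]
      revert h
      cases g a <;> cases g b <;> cases g (b + 1) <;> simp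

theorem filter_lt_switches {a b x : ℕ} (hx : x ≤ b) :
    {k ∈ switches g a b | k < x} = switches g a x := by
  ext k
  simp only [switches, mem_filter, mem_Ico]
  grind

theorem sort_switches_getElem_eq_iff_even {a b t : ℕ}
    (ht : t < ((switches g a b).sort (· ≤ ·)).length) :
    g ((switches g a b).sort (· ≤ ·))[t] = g a ↔ Even t := by
  obtain ⟨hx, -⟩ := mem_filter.1 <| mem_sort (· ≤ ·) |>.1 (List.getElem_mem ht)
  rw [eq_iff_even_card_switches g (mem_Ico.1 hx).1, ← filter_lt_switches g (mem_Ico.1 hx).2.le,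
    card_filter_lt_sort_getElem]

end Switches

def leftOf (π : Equiv.Perm ℕ) (i j : ℕ) : Bool := decide (π.symm j ≤ i)

section Row

variable (π : Equiv.Perm ℕ) (i : ℕ)

theorem isBox_iff {j : ℕ} :
    IsBox π π.symm i j ↔ min (π i) (π (i + 1)) ≤ j ∧ j < max (π i) (π (i + 1)) ∧
      leftOf π i j ≠ leftOf π i (j + 1) := by
  simp only [IsBox, leftOf, ne_eq, decide_eq_decide]
  omega

theorem windmilled_iff {j : ℕ} :
    Windmilled π π.symm i j ↔
      IsBox π π.symm i j ∧ leftOf π i j ≠ leftOf π i (min (π i) (π (i + 1))) := by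
  refine and_congr_right fun hbox => ?_
  obtain ⟨hmin, hmax, -⟩ := hbox
  rcases le_total (π i) (π (i + 1)) with h | h
  · rw [min_eq_left h] at hmin ⊢
    simp [leftOf, not_lt.2 hmin]
  · rw [min_eq_right h] at hmin ⊢
    rw [max_eq_left h] at hmax
    simp [leftOf, hmax]

theorem leftOf_min_ne_leftOf_max :
    leftOf π i (min (π i) (π (i + 1))) ≠ leftOf π i (max (π i) (π (i + 1))) := by
  rcases le_total (π i) (π (i + 1)) with h | h
  · simp [leftOf, min_eq_left h, max_eq_right h]
  · simp [leftOf, min_eq_right h, max_eq_left h]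

theorem filter_isBox_eq_switches {n : ℕ}
    (hπ : ∀ k ∈ Icc 1 (n + 1), π k ∈ Icc 1 (n + 1)) (hi : i ∈ Icc 1 n) :
    {j ∈ Icc 1 n | IsBox π π.symm i j} =
      switches (leftOf π i) (min (π i) (π (i + 1))) (max (π i) (π (i + 1))) := by
  rw [mem_Icc] at hi
  have h₀ := mem_Icc.1 (hπ i (mem_Icc.2 ⟨hi.1, by omega⟩))
  have h₁ := mem_Icc.1 (hπ (i + 1) (mem_Icc.2 ⟨by omega, by omega⟩))
  ext j
  simp only [mem_filter, mem_Icc, switches, mem_Ico, isBox_iff]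
  exact ⟨fun ⟨_, hm, hM, hj⟩ => ⟨⟨hm, hM⟩, hj⟩,
    fun ⟨⟨hm, hM⟩, hj⟩ => ⟨⟨by omega, by omega⟩, hm, hM, hj⟩⟩

variable {π i} {n : ℕ}

theorem odd_card_filter_isBox (hπ : ∀ k ∈ Icc 1 (n + 1), π k ∈ Icc 1 (n + 1))
    (hi : i ∈ Icc 1 n) : Odd #{j ∈ Icc 1 n | IsBox π π.symm i j} := by
  rw [filter_isBox_eq_switches π i hπ hi, ← Nat.not_even_iff_odd,
    ← eq_iff_even_card_switches _ min_le_max]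
  exact (leftOf_min_ne_leftOf_max π i).symm

theorem windmilled_sort_filter_isBox_getElem_iff_odd
    (hπ : ∀ k ∈ Icc 1 (n + 1), π k ∈ Icc 1 (n + 1)) (hi : i ∈ Icc 1 n) (t : ℕ)
    (ht : t < ({j ∈ Icc 1 n | IsBox π π.symm i j}.sort (· ≤ ·)).length) :
    Windmilled π π.symm i ({j ∈ Icc 1 n | IsBox π π.symm i j}.sort (· ≤ ·))[t] ↔ Odd t := by
  have hbox := (mem_filter.1 <| (mem_sort (· ≤ ·)).1 (List.getElem_mem ht)).2
  have key : ∀ ht : t < ({j ∈ Icc 1 n | IsBox π π.symm i j}.sort (· ≤ ·)).length,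
      leftOf π i ({j ∈ Icc 1 n | IsBox π π.symm i j}.sort (· ≤ ·))[t] =
        leftOf π i (min (π i) (π (i + 1))) ↔ Even t := by
    rw [filter_isBox_eq_switches π i hπ hi]
    exact sort_switches_getElem_eq_iff_even _
  rw [windmilled_iff, and_iff_right hbox, ← Nat.not_even_iff_odd]
  exact (key ht).not

end Row

theorem stmt6_general (n : ℕ) (π : Equiv.Perm ℕ)
    (hπ : ∀ k ∈ Finset.Icc 1 (n+1), π k ∈ Finset.Icc 1 (n+1))
    (i : ℕ) (hi : i ∈ Finset.Icc 1 n)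
    (l : List ℕ)
    (hl : l = ((Finset.Icc 1 n).filter (fun j => IsBox (⇑π) (⇑π.symm) i j)).sort (· ≤ ·)) :
    (∀ t (ht : t < l.length), (Windmilled (⇑π) (⇑π.symm) i (l.get ⟨t, ht⟩) ↔ Odd t)) ∧
    Odd l.length ∧
    (∀ j, l.head? = some j → ¬ Windmilled (⇑π) (⇑π.symm) i j) ∧
    (∀ j, l.getLast? = some j → ¬ Windmilled (⇑π) (⇑π.symm) i j) ∧
    ((Finset.Icc 1 n).filter (fun j => Windmilled (⇑π) (⇑π.symm) i j)).card
      = (l.length - 1) / 2 ∧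
    ((Finset.Icc 1 n).filter
        (fun j => IsBox (⇑π) (⇑π.symm) i j ∧ ¬ Windmilled (⇑π) (⇑π.symm) i j)).card
      = (l.length + 1) / 2 := by
  subst hl
  have hW := windmilled_sort_filter_isBox_getElem_iff_odd hπ hi
  obtain ⟨k, hk⟩ := odd_card_filter_isBox hπ hi
  set S := {j ∈ Icc 1 n | IsBox π π.symm i j}
  have hcardW : #{j ∈ Icc 1 n | Windmilled π π.symm i j} = #S / 2 := by
    rw [← card_filter_of_sort_getElem_iff_odd S _ hW, filter_filter]
    exact congrArg card (filter_congr fun j _ => (and_iff_right_of_imp And.left).symm)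
  have hcardNW : #{j ∈ Icc 1 n | IsBox π π.symm i j ∧ ¬Windmilled π π.symm i j} + #S / 2 = #S := by
    rw [← filter_filter, ← card_filter_of_sort_getElem_iff_odd S _ hW, add_comm]
    exact card_filter_add_card_filter_not _
  refine ⟨hW, ⟨k, by simpa using hk⟩, ?_, ?_, by simp only [length_sort]; omega,
    by simp only [length_sort]; omega⟩
  · intro j hj
    rw [List.head?_eq_getElem?] at hj
    obtain ⟨h0, rfl⟩ := List.getElem?_eq_some_iff.1 hj
    simpa using (hW 0 h0).not
  · intro j hj
    rw [List.getLast?_eq_getElem?] at hj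
    obtain ⟨h, rfl⟩ := List.getElem?_eq_some_iff.1 hj
    rw [hW, length_sort, hk]
    simp

theorem stmt6 (n : ℕ) (hn : 1 ≤ n) (π : Equiv.Perm ℕ)
    (hπ : ∀ k ∈ Finset.Icc 1 (n+1), π k ∈ Finset.Icc 1 (n+1))
    (i : ℕ) (hi : i ∈ Finset.Icc 1 n)
    (l : List ℕ)
    (hl : l = ((Finset.Icc 1 n).filter (fun j => IsBox (⇑π) (⇑π.symm) i j)).sort (· ≤ ·)) :
    (∀ t (ht : t < l.length), (Windmilled (⇑π) (⇑π.symm) i (l.get ⟨t, ht⟩) ↔ Odd t)) ∧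
    Odd l.length ∧
    (∀ j, l.head? = some j → ¬ Windmilled (⇑π) (⇑π.symm) i j) ∧
    (∀ j, l.getLast? = some j → ¬ Windmilled (⇑π) (⇑π.symm) i j) ∧
    ((Finset.Icc 1 n).filter (fun j => Windmilled (⇑π) (⇑π.symm) i j)).card
      = (l.length - 1) / 2 ∧
    ((Finset.Icc 1 n).filter
        (fun j => IsBox (⇑π) (⇑π.symm) i j ∧ ¬ Windmilled (⇑π) (⇑π.symm) i j)).card
      = (l.length + 1) / 2 :=
  stmt6_general n π hπ i hi l hl
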